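/- For each fixed x > 0, the limit lim_{t→0⁺} u(x,t) exists and equals u_0(x). -/

import Mathlib

open Complex MeasureTheory Real Filter Topology Set

/-- Half-line Fourier transform `û₀(λ) = ∫_0^∞ u₀(y) e^{-iλy} dy`. -/
noncomputable def uhat (u₀ : ℝ → ℂ) (l : ℂ) : ℂ :=
  ∫ y in Set.Ioi (0:ℝ), u₀ y * Complex.exp (-Complex.I * l * y)

/-- `g̃₀(λ,t) = ∫_0^t e^{λ²τ} g₀(τ) dτ`. -/
noncomputable def gtilde (g₀ : ℝ → ℂ) (l : ℂ) (t : ℝ) : ℂ :=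
  ∫ τ in Set.Ioc (0:ℝ) t, Complex.exp (l ^ 2 * τ) * g₀ τ

/-- Integral over the contour Γ: the ray `arg λ = 3π/4` from ∞ to 0 followed by the
ray `arg λ = π/4` from 0 to ∞. -/
noncomputable def gammaInt (F : ℂ → ℂ) : ℂ :=
  (∫ s in Set.Ioi (0:ℝ),
      F (s * Complex.exp (Complex.I * (Real.pi / 4))) * Complex.exp (Complex.I * (Real.pi / 4)))
  - ∫ s in Set.Ioi (0:ℝ),
      F (s * Complex.exp (Complex.I * (3 * Real.pi / 4))) * Complex.exp (Complex.I * (3 * Real.pi / 4))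

/-- `u₀ ∈ 𝒮([0,∞))`: restriction of a `C^∞` function on `ℝ`, rapidly decreasing with all
derivatives on `[0,∞)`. -/
def SchwartzHalfLine (u₀ : ℝ → ℂ) : Prop :=
  ContDiff ℝ (⊤ : ℕ∞) u₀ ∧
    ∀ M N : ℕ, ∃ C : ℝ, ∀ x : ℝ, 0 ≤ x → x ^ M * ‖iteratedDeriv N u₀ x‖ ≤ C

/-- The quarter plane `Q = {(x,t) : x > 0, t > 0}`. -/
def Qset : Set (ℝ × ℝ) := {p : ℝ × ℝ | 0 < p.1 ∧ 0 < p.2}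

/-- `u` is given, for `x > 0`, `t > 0`, by the Fokas unified transform representation. -/
def IsFokasSolution (u₀ g₀ : ℝ → ℂ) (u : ℝ → ℝ → ℂ) : Prop :=
  ∀ x t : ℝ, 0 < x → 0 < t →
    u x t =
      (1 / (2 * (Real.pi : ℂ))) *
          (∫ l : ℝ, Complex.exp (Complex.I * l * x - l ^ 2 * t) * uhat u₀ l)
        - (1 / (2 * (Real.pi : ℂ))) *
          gammaInt (fun l => Complex.exp (Complex.I * l * x - l ^ 2 * t) * uhat u₀ (-l))
        - (Complex.I / (Real.pi : ℂ)) *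
          gammaInt (fun l => Complex.exp (Complex.I * l * x - l ^ 2 * t) * l * gtilde g₀ l t)

namespace FokasAux

lemma norm_cexp (z : ℂ) : ‖Complex.exp z‖ = Real.exp z.re := by
  simp [Complex.norm_exp]

lemma re_ofReal_mul' (r : ℝ) (z : ℂ) : ((r : ℂ) * z).re = r * z.re := by
  simp [Complex.mul_re]

lemma integrableOn_cexp_mul {c : ℂ} (hc : c.re < 0) :
    IntegrableOn (fun s : ℝ => Complex.exp (c * s)) (Ioi (0:ℝ)) := by
  apply Integrable.mono' (exp_neg_integrableOn_Ioi 0 (neg_pos.2 hc))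
  · exact (Complex.continuous_exp.comp (continuous_const.mul Complex.continuous_ofReal)).aestronglyMeasurable
  · filter_upwards with s
    rw [norm_cexp]
    simp [Complex.mul_re, mul_comm, le_refl]

lemma integral_cexp_Ioi {c : ℂ} (hc : c.re < 0) :
    ∫ s in Ioi (0:ℝ), Complex.exp (c * s) = -(1/c) := by
  have hc0 : c ≠ 0 := fun h => by simp [h] at hc
  have hderiv : ∀ s ∈ Ici (0:ℝ),
      HasDerivAt (fun s : ℝ => Complex.exp (c * s) / c) (Complex.exp (c * s)) s := by
    intro s _
    have h2 : HasDerivAt (fun y : ℝ => c * (y : ℂ)) c s := by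
      simpa using (Complex.ofRealCLM.hasDerivAt (x := s)).const_mul c
    have h1 : HasDerivAt (fun s : ℝ => Complex.exp (c * s)) (Complex.exp (c * s) * c) s :=
      (Complex.hasDerivAt_exp (c * s)).comp s h2
    simpa [mul_div_assoc, mul_div_cancel_right₀ _ hc0] using h1.div_const c
  have htend : Tendsto (fun s : ℝ => Complex.exp (c * s) / c) atTop (𝓝 0) := by
    rw [tendsto_zero_iff_norm_tendsto_zero]
    have : Tendsto (fun s : ℝ => Real.exp (c.re * s) / ‖c‖) atTop (𝓝 (0 / ‖c‖)) := by
      apply Tendsto.div_const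
      apply Real.tendsto_exp_atBot.comp
      exact (tendsto_const_mul_atBot_of_neg hc).2 tendsto_id
    rw [zero_div] at this
    apply this.congr
    intro s
    rw [norm_div, norm_cexp]
    simp [Complex.mul_re]
  have := integral_Ioi_of_hasDerivAt_of_tendsto' hderiv (integrableOn_cexp_mul hc) htend
  simpa using this

lemma integrableOn_mul_exp_neg {b : ℝ} (hb : 0 < b) :
    IntegrableOn (fun s : ℝ => s * Real.exp (-b * s)) (Ioi (0:ℝ)) := by
  apply Integrable.mono' ((exp_neg_integrableOn_Ioi 0 (half_pos hb)).const_mul (2 / b))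
  · exact (continuous_id.mul ((continuous_const.mul continuous_id).rexp)).aestronglyMeasurable
  · filter_upwards [ae_restrict_mem measurableSet_Ioi] with s (hs : 0 < s)
    have h1 : b / 2 * s ≤ Real.exp (b / 2 * s) := by
      linarith [Real.add_one_le_exp (b / 2 * s)]
    have h1' : s ≤ 2 / b * Real.exp (b / 2 * s) := by
      calc s = 2 / b * (b / 2 * s) := by field_simp
        _ ≤ 2 / b * Real.exp (b / 2 * s) := mul_le_mul_of_nonneg_left h1 (by positivity)
    have h2 : s * Real.exp (-b * s) ≤ 2 / b * Real.exp (-(b / 2) * s) := by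
      calc s * Real.exp (-b * s) ≤ 2 / b * Real.exp (b / 2 * s) * Real.exp (-b * s) :=
            mul_le_mul_of_nonneg_right h1' (Real.exp_nonneg _)
        _ = 2 / b * Real.exp (-(b / 2) * s) := by
            rw [mul_assoc, ← Real.exp_add]
            ring_nf
    rw [Real.norm_eq_abs, _root_.abs_of_nonneg (by positivity)]
    exact h2

variable {u₀ g₀ : ℝ → ℂ}

lemma u0_bound (hu₀ : SchwartzHalfLine u₀) :
    ∃ C : ℝ, ∀ y : ℝ, 0 ≤ y → ‖u₀ y‖ ≤ C / (1 + y ^ 2) := by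
  obtain ⟨C₀, h₀⟩ := hu₀.2 0 0
  obtain ⟨C₂, h₂⟩ := hu₀.2 2 0
  refine ⟨C₀ + C₂, fun y hy => ?_⟩
  have e₀ := h₀ y hy
  have e₂ := h₂ y hy
  rw [iteratedDeriv_zero] at e₀ e₂
  rw [pow_zero, one_mul] at e₀
  rw [le_div_iff₀ (by positivity)]
  nlinarith [norm_nonneg (u₀ y), sq_nonneg y]

lemma integrableOn_u0 (hu₀ : SchwartzHalfLine u₀) : IntegrableOn u₀ (Ioi (0:ℝ)) := by
  obtain ⟨C, hC⟩ := u0_bound hu₀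
  apply Integrable.mono' ((integrable_inv_one_add_sq.const_mul C).integrableOn)
  · exact hu₀.1.continuous.aestronglyMeasurable
  · filter_upwards [ae_restrict_mem measurableSet_Ioi] with y (hy : 0 < y)
    simpa [div_eq_mul_inv] using hC y hy.le

lemma uhat_norm_le (hu₀ : SchwartzHalfLine u₀) {l : ℂ} (hl : l.im ≤ 0) :
    ‖uhat u₀ l‖ ≤ ∫ y in Ioi (0:ℝ), ‖u₀ y‖ := by
  apply norm_integral_le_of_norm_le (integrableOn_u0 hu₀).norm
  filter_upwards [ae_restrict_mem measurableSet_Ioi] with y (hy : 0 < y)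
  rw [norm_mul, norm_cexp]
  have hre : (-Complex.I * l * (y:ℂ)).re = l.im * y := by
    simp [Complex.mul_re, Complex.mul_im]
  rw [hre]
  calc ‖u₀ y‖ * Real.exp (l.im * y) ≤ ‖u₀ y‖ * 1 := by
        apply mul_le_mul_of_nonneg_left _ (norm_nonneg _)
        rw [Real.exp_le_one_iff]
        exact mul_nonpos_of_nonpos_of_nonneg hl hy.le
    _ = ‖u₀ y‖ := mul_one _

lemma ray_re_I_mul (θ : ℝ) : (Complex.I * Complex.exp (Complex.I * θ)).re = -Real.sin θ := by
  rw [mul_comm Complex.I (θ:ℂ)]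
  simp [Complex.mul_re, Complex.exp_ofReal_mul_I_re, Complex.exp_ofReal_mul_I_im]

lemma ray_sq_re (θ : ℝ) : ((Complex.exp (Complex.I * θ)) ^ 2).re = Real.cos (2 * θ) := by
  rw [sq, ← Complex.exp_add]
  have : Complex.I * θ + Complex.I * θ = ((2 * θ : ℝ) : ℂ) * Complex.I := by
    push_cast; ring
  rw [this, Complex.exp_ofReal_mul_I_re]

lemma ray_abs (θ : ℝ) : ‖Complex.exp (Complex.I * θ)‖ = 1 := by
  rw [mul_comm Complex.I (θ:ℂ)]
  exact Complex.norm_exp_ofReal_mul_I θ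

/-- Real part of the Fokas exponent along a ray where `(e^2).re = 0`. -/
lemma exp_re_ray {e : ℂ} {b : ℝ} (hIe : (Complex.I * e).re = -b) (he2 : (e ^ 2).re = 0)
    (s x t : ℝ) :
    (Complex.I * ((s:ℂ) * e) * (x:ℂ) - ((s:ℂ) * e) ^ 2 * (t:ℂ)).re = -(b * x) * s := by
  have h1 : Complex.I * ((s:ℂ) * e) * (x:ℂ) - ((s:ℂ) * e) ^ 2 * (t:ℂ)
      = ((s * x : ℝ) : ℂ) * (Complex.I * e) - ((s ^ 2 * t : ℝ) : ℂ) * e ^ 2 := by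
    push_cast; ring
  rw [h1, Complex.sub_re, re_ofReal_mul', re_ofReal_mul', hIe, he2]
  ring

lemma meas_uhat_ray (hu₀ : SchwartzHalfLine u₀) (e : ℂ) :
    StronglyMeasurable (fun s : ℝ => uhat u₀ (-((s:ℂ) * e))) := by
  have : (fun s : ℝ => uhat u₀ (-((s:ℂ) * e)))
      = fun s : ℝ => ∫ y in Ioi (0:ℝ), u₀ y * Complex.exp (-Complex.I * -((s:ℂ) * e) * (y:ℂ)) := by
    rfl
  rw [this]
  apply MeasureTheory.StronglyMeasurable.integral_prod_right
    (f := fun (s : ℝ) (y : ℝ) => u₀ y * Complex.exp (-Complex.I * -((s:ℂ) * e) * (y:ℂ)))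
  apply Continuous.stronglyMeasurable
  apply Continuous.mul (hu₀.1.continuous.comp continuous_snd)
  apply Complex.continuous_exp.comp
  fun_prop

lemma e_ne_zero {e : ℂ} {b : ℝ} (hIe : (Complex.I * e).re = -b) (hb : 0 < b) : e ≠ 0 := by
  intro h
  rw [h, mul_zero] at hIe
  simp at hIe
  linarith

lemma e_im_pos {e : ℂ} {b : ℝ} (hIe : (Complex.I * e).re = -b) (hb : 0 < b) : 0 < e.im := by
  rw [Complex.I_mul_re] at hIe
  linarith

/-- Dominated convergence for one ray of the `B` term as `t → 0⁺`. -/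
lemma tendstoB_ray (hu₀ : SchwartzHalfLine u₀) {x b : ℝ} (hx : 0 < x) (e : ℂ)
    (hIe : (Complex.I * e).re = -b) (hb : 0 < b) (he2 : (e ^ 2).re = 0) :
    Tendsto (fun t : ℝ => ∫ s in Ioi (0:ℝ),
        Complex.exp (Complex.I * ((s:ℂ) * e) * (x:ℂ) - ((s:ℂ) * e) ^ 2 * (t:ℂ))
          * uhat u₀ (-((s:ℂ) * e)) * e)
      (𝓝[>] (0:ℝ))
      (𝓝 (∫ s in Ioi (0:ℝ),
        Complex.exp (Complex.I * ((s:ℂ) * e) * (x:ℂ)) * uhat u₀ (-((s:ℂ) * e)) * e)) := by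
  set L : ℝ := ∫ y in Ioi (0:ℝ), ‖u₀ y‖ with hL
  have hbx : 0 < b * x := mul_pos hb hx
  have huhat : ∀ s : ℝ, 0 ≤ s → ‖uhat u₀ (-((s:ℂ) * e))‖ ≤ L := by
    intro s hs
    apply uhat_norm_le hu₀
    simp only [Complex.neg_im, Complex.mul_im, Complex.ofReal_re, Complex.ofReal_im]
    have := e_im_pos hIe hb
    nlinarith
  have hmeas : ∀ t : ℝ, AEStronglyMeasurable
      (fun s : ℝ => Complex.exp (Complex.I * ((s:ℂ) * e) * (x:ℂ) - ((s:ℂ) * e) ^ 2 * (t:ℂ))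
        * uhat u₀ (-((s:ℂ) * e)) * e)
      (volume.restrict (Ioi (0:ℝ))) := by
    intro t
    apply AEStronglyMeasurable.mul _ aestronglyMeasurable_const
    apply AEStronglyMeasurable.mul
    · apply Continuous.aestronglyMeasurable
      apply Complex.continuous_exp.comp
      fun_prop
    · exact (meas_uhat_ray hu₀ e).aestronglyMeasurable
  apply tendsto_integral_filter_of_dominated_convergence
      (fun s : ℝ => (L * ‖e‖) * Real.exp (-(b * x) * s))
  · filter_upwards with t using hmeas t
  · filter_upwards [self_mem_nhdsWithin] with t (ht : 0 < t)
    filter_upwards [ae_restrict_mem measurableSet_Ioi] with s (hs : 0 < s)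
    rw [norm_mul, norm_mul, norm_cexp, exp_re_ray hIe he2]
    calc Real.exp (-(b * x) * s) * ‖uhat u₀ (-((s:ℂ) * e))‖ * ‖e‖
        ≤ Real.exp (-(b * x) * s) * L * ‖e‖ := by
          apply mul_le_mul_of_nonneg_right _ (norm_nonneg _)
          exact mul_le_mul_of_nonneg_left (huhat s hs.le) (Real.exp_nonneg _)
      _ = L * ‖e‖ * Real.exp (-(b * x) * s) := by
          ring
  · exact ((exp_neg_integrableOn_Ioi 0 hbx).const_mul _)
  · filter_upwards [ae_restrict_mem measurableSet_Ioi] with s (hs : 0 < s)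
    have hcont : Tendsto (fun t : ℝ =>
        Complex.exp (Complex.I * ((s:ℂ) * e) * (x:ℂ) - ((s:ℂ) * e) ^ 2 * (t:ℂ))
          * uhat u₀ (-((s:ℂ) * e)) * e) (𝓝 0)
        (𝓝 (Complex.exp (Complex.I * ((s:ℂ) * e) * (x:ℂ)) * uhat u₀ (-((s:ℂ) * e)) * e)) := by
      have : Continuous (fun t : ℝ =>
          Complex.exp (Complex.I * ((s:ℂ) * e) * (x:ℂ) - ((s:ℂ) * e) ^ 2 * (t:ℂ))
            * uhat u₀ (-((s:ℂ) * e)) * e) := by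
        apply Continuous.mul _ continuous_const
        apply Continuous.mul _ continuous_const
        apply Complex.continuous_exp.comp
        fun_prop
      have h0 := this.tendsto 0
      simpa using h0
    exact hcont.mono_left nhdsWithin_le_nhds

/-- The value of one ray of the `B` term at `t = 0`, via Fubini: it does not depend on the
direction `e` of the ray. -/
lemma rayB_value (hu₀ : SchwartzHalfLine u₀) {x b : ℝ} (hx : 0 < x) (e : ℂ)
    (hIe : (Complex.I * e).re = -b) (hb : 0 < b) :
    ∫ s in Ioi (0:ℝ), Complex.exp (Complex.I * ((s:ℂ) * e) * (x:ℂ)) * uhat u₀ (-((s:ℂ) * e)) * e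
      = ∫ y in Ioi (0:ℝ), u₀ y * -(1 / (Complex.I * ((x:ℂ) + (y:ℂ)))) := by
  have he0 : e ≠ 0 := e_ne_zero hIe hb
  have hbx : 0 < b * x := mul_pos hb hx
  set G : ℝ → ℝ → ℂ := fun s y => u₀ y * Complex.exp (Complex.I * e * ((x:ℂ) + (y:ℂ)) * (s:ℂ)) * e
    with hG
  have hinner : ∀ s : ℝ,
      Complex.exp (Complex.I * ((s:ℂ) * e) * (x:ℂ)) * uhat u₀ (-((s:ℂ) * e)) * e
        = ∫ y in Ioi (0:ℝ), G s y := by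
    intro s
    rw [uhat, ← MeasureTheory.integral_const_mul, ← MeasureTheory.integral_mul_const]
    apply MeasureTheory.integral_congr_ae (ae_of_all _ fun y => ?_)
    have hexp : Complex.exp (Complex.I * ((s:ℂ) * e) * (x:ℂ))
        * Complex.exp (-Complex.I * -((s:ℂ) * e) * (y:ℂ))
        = Complex.exp (Complex.I * e * ((x:ℂ) + (y:ℂ)) * (s:ℂ)) := by
      rw [← Complex.exp_add]; congr 1; ring
    rw [hG]; dsimp only
    rw [← hexp]; ring
  have hre : ∀ s y : ℝ, (Complex.I * e * ((x:ℂ) + (y:ℂ)) * (s:ℂ)).re = -b * ((x + y) * s) := by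
    intro s y
    have h1 : Complex.I * e * ((x:ℂ) + (y:ℂ)) * (s:ℂ)
        = (((x + y) * s : ℝ) : ℂ) * (Complex.I * e) := by push_cast; ring
    rw [h1, re_ofReal_mul', hIe]; ring
  have hGint : Integrable (Function.uncurry G)
      ((volume.restrict (Ioi (0:ℝ))).prod (volume.restrict (Ioi (0:ℝ)))) := by
    apply Integrable.mono'
        ((exp_neg_integrableOn_Ioi 0 hbx).mul_prod ((integrableOn_u0 hu₀).norm.mul_const ‖e‖))
    · apply Continuous.aestronglyMeasurable
      apply Continuous.mul _ continuous_const
      apply Continuous.mul (hu₀.1.continuous.comp continuous_snd)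
      apply Complex.continuous_exp.comp
      fun_prop
    · rw [Measure.prod_restrict]
      filter_upwards [ae_restrict_mem (measurableSet_Ioi.prod measurableSet_Ioi)] with p hp
      obtain ⟨(hp1 : 0 < p.1), (hp2 : 0 < p.2)⟩ := hp
      rw [Function.uncurry]
      rw [hG]; dsimp only
      rw [norm_mul, norm_mul, norm_cexp, hre]
      have hmono : Real.exp (-b * ((x + p.2) * p.1)) ≤ Real.exp (-(b * x) * p.1) := by
        apply Real.exp_le_exp.2
        nlinarith [mul_pos (mul_pos hb hp2) hp1]
      calc ‖u₀ p.2‖ * Real.exp (-b * ((x + p.2) * p.1)) * ‖e‖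
          ≤ ‖u₀ p.2‖ * Real.exp (-(b * x) * p.1) * ‖e‖ := by
            apply mul_le_mul_of_nonneg_right _ (norm_nonneg _)
            exact mul_le_mul_of_nonneg_left hmono (norm_nonneg _)
        _ = Real.exp (-(b * x) * p.1) * (‖u₀ p.2‖ * ‖e‖) := by ring
  calc ∫ s in Ioi (0:ℝ),
        Complex.exp (Complex.I * ((s:ℂ) * e) * (x:ℂ)) * uhat u₀ (-((s:ℂ) * e)) * e
      = ∫ s in Ioi (0:ℝ), ∫ y in Ioi (0:ℝ), G s y := by
        exact MeasureTheory.integral_congr_ae (ae_of_all _ hinner)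
    _ = ∫ y in Ioi (0:ℝ), ∫ s in Ioi (0:ℝ), G s y := integral_integral_swap hGint
    _ = ∫ y in Ioi (0:ℝ), u₀ y * -(1 / (Complex.I * ((x:ℂ) + (y:ℂ)))) := by
        apply setIntegral_congr_ae measurableSet_Ioi
        filter_upwards with y (hy : 0 < y)
        have hz : (x:ℂ) + (y:ℂ) ≠ 0 := by
          rw [← Complex.ofReal_add]
          exact Complex.ofReal_ne_zero.2 (by positivity)
        have hcre : (Complex.I * e * ((x:ℂ) + (y:ℂ))).re < 0 := by
          have h1 : Complex.I * e * ((x:ℂ) + (y:ℂ)) = (((x + y) : ℝ) : ℂ) * (Complex.I * e) := by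
            push_cast; ring
          rw [h1, re_ofReal_mul', hIe]
          have : 0 < x + y := by linarith
          nlinarith
        rw [hG]; dsimp only
        rw [MeasureTheory.integral_mul_const, MeasureTheory.integral_const_mul,
          integral_cexp_Ioi hcre]
        rw [mul_assoc]
        congr 1
        field_simp
  done

lemma gtilde_norm_le (hg₀ : ContDiff ℝ (⊤ : ℕ∞) g₀) {e : ℂ} (he2 : (e ^ 2).re = 0) {M : ℝ}
    (hM : ∀ τ ∈ Icc (0:ℝ) 1, ‖g₀ τ‖ ≤ M) {s t : ℝ} (ht : 0 < t) (ht1 : t ≤ 1) :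
    ‖gtilde g₀ ((s:ℂ) * e) t‖ ≤ M * t := by
  rw [gtilde]
  have hvol : volume (Ioc (0:ℝ) t) < ⊤ := by
    rw [Real.volume_Ioc]; exact ENNReal.ofReal_lt_top
  have hb : ∀ τ ∈ Ioc (0:ℝ) t, ‖Complex.exp (((s:ℂ) * e) ^ 2 * (τ:ℂ)) * g₀ τ‖ ≤ M := by
    intro τ hτ
    rw [norm_mul, norm_cexp]
    have hre : ((((s:ℂ) * e) ^ 2) * (τ:ℂ)).re = 0 := by
      have h1 : (((s:ℂ) * e) ^ 2) * (τ:ℂ) = ((s ^ 2 * τ : ℝ) : ℂ) * e ^ 2 := by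
        push_cast; ring
      rw [h1, re_ofReal_mul', he2, mul_zero]
    rw [hre, Real.exp_zero, one_mul]
    exact hM τ ⟨hτ.1.le, hτ.2.trans ht1⟩
  have := MeasureTheory.norm_setIntegral_le_of_norm_le_const hvol hb
  · calc ‖∫ τ in Ioc (0:ℝ) t, Complex.exp (((s:ℂ) * e) ^ 2 * (τ:ℂ)) * g₀ τ‖
        ≤ M * (volume (Ioc (0:ℝ) t)).toReal := this
      _ = M * t := by rw [Real.volume_Ioc, ENNReal.toReal_ofReal (by linarith)]; ring_nf

/-- One ray of the `C` (boundary-data) term tends to `0` as `t → 0⁺`. -/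
lemma tendstoC_ray (hg₀ : ContDiff ℝ (⊤ : ℕ∞) g₀) {x b : ℝ} (hx : 0 < x) (e : ℂ)
    (hIe : (Complex.I * e).re = -b) (hb : 0 < b) (he2 : (e ^ 2).re = 0)
    (habs : ‖e‖ = 1) :
    Tendsto (fun t : ℝ => ∫ s in Ioi (0:ℝ),
        Complex.exp (Complex.I * ((s:ℂ) * e) * (x:ℂ) - ((s:ℂ) * e) ^ 2 * (t:ℂ))
          * ((s:ℂ) * e) * gtilde g₀ ((s:ℂ) * e) t * e)
      (𝓝[>] (0:ℝ)) (𝓝 0) := by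
  have hbx : 0 < b * x := mul_pos hb hx
  obtain ⟨M, hM⟩ := isCompact_Icc.exists_bound_of_continuousOn
    (hg₀.continuous.continuousOn : ContinuousOn g₀ (Icc (0:ℝ) 1))
  have hM0 : 0 ≤ M := le_trans (norm_nonneg (g₀ 0)) (hM 0 ⟨le_refl 0, zero_le_one⟩)
  set K : ℝ := ∫ s in Ioi (0:ℝ), s * Real.exp (-(b * x) * s) with hK
  apply squeeze_zero_norm'
  · filter_upwards [Ioc_mem_nhdsGT_of_mem (by constructor <;> norm_num : (0:ℝ) ∈ Ico 0 1)]
      with t ht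
    obtain ⟨ht0, ht1⟩ := ht
    have hbound : ∀ᵐ (s : ℝ) ∂(volume.restrict (Ioi (0:ℝ))),
        ‖Complex.exp (Complex.I * ((s:ℂ) * e) * (x:ℂ) - ((s:ℂ) * e) ^ 2 * (t:ℂ))
          * ((s:ℂ) * e) * gtilde g₀ ((s:ℂ) * e) t * e‖
        ≤ (M * t) * (s * Real.exp (-(b * x) * s)) := by
      filter_upwards [ae_restrict_mem measurableSet_Ioi] with s (hs : 0 < s)
      rw [norm_mul, norm_mul, norm_mul, norm_cexp, exp_re_ray hIe he2]
      rw [habs, mul_one]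
      have h2 : ‖(s:ℂ) * e‖ = s := by
        rw [norm_mul, habs, mul_one, Complex.norm_real,
          Real.norm_eq_abs, _root_.abs_of_nonneg hs.le]
      rw [h2]
      calc Real.exp (-(b * x) * s) * s * ‖gtilde g₀ ((s:ℂ) * e) t‖
          ≤ Real.exp (-(b * x) * s) * s * (M * t) := by
            apply mul_le_mul_of_nonneg_left (gtilde_norm_le hg₀ he2 hM ht0 ht1)
            positivity
        _ = (M * t) * (s * Real.exp (-(b * x) * s)) := by ring
    calc ‖∫ s in Ioi (0:ℝ),
          Complex.exp (Complex.I * ((s:ℂ) * e) * (x:ℂ) - ((s:ℂ) * e) ^ 2 * (t:ℂ))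
            * ((s:ℂ) * e) * gtilde g₀ ((s:ℂ) * e) t * e‖
        ≤ ∫ s in Ioi (0:ℝ), (M * t) * (s * Real.exp (-(b * x) * s)) := by
          apply MeasureTheory.norm_integral_le_of_norm_le _ hbound
          exact (integrableOn_mul_exp_neg hbx).const_mul _
      _ = (M * K) * t := by
          rw [MeasureTheory.integral_const_mul, hK]; ring
  · have : Tendsto (fun t : ℝ => (M * K) * t) (𝓝 (0:ℝ)) (𝓝 ((M * K) * 0)) :=
      (continuous_const.mul continuous_id).tendsto 0
    rw [mul_zero] at this
    exact this.mono_left nhdsWithin_le_nhds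

lemma reA (l x t : ℝ) : (Complex.I * (l:ℂ) * (x:ℂ) - (l:ℂ) ^ 2 * (t:ℂ)).re = -(t * l ^ 2) := by
  simp [Complex.sub_re, Complex.mul_re, pow_two]
  ring

lemma reB (l y : ℝ) : (-Complex.I * (l:ℂ) * (y:ℂ)).re = 0 := by
  simp [Complex.mul_re]

lemma real_scalar_eq {t : ℝ} (ht : 0 < t) :
    (1 / (2 * Real.pi)) * (Real.pi / t) ^ ((1:ℝ)/2)
      = (Real.pi * (4 * Real.pi ^ 2 * t)⁻¹) ^ ((1:ℝ)/2) := by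
  rw [← Real.sqrt_eq_rpow, ← Real.sqrt_eq_rpow]
  have h1 : Real.pi * (4 * Real.pi ^ 2 * t)⁻¹ = (Real.pi / t) * ((2 * Real.pi)⁻¹) ^ 2 := by
    rw [eq_comm, div_mul_eq_mul_div, mul_comm]
    rw [div_eq_iff ht.ne']
    field_simp
    ring
  rw [h1, Real.sqrt_mul (by positivity), Real.sqrt_sq (by positivity)]
  ring

lemma gaussian_scalar_eq {t : ℝ} (ht : 0 < t) (x y : ℝ) :
    (1 / (2 * (Real.pi:ℂ))) * (((Real.pi:ℂ) / (t:ℂ)) ^ ((1:ℂ)/2)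
        * Complex.exp (-((x:ℂ) - (y:ℂ)) ^ 2 / (4 * (t:ℂ))))
    = ((Real.pi:ℂ) * (((4 * Real.pi ^ 2 * t)⁻¹ : ℝ) : ℂ)) ^ ((1:ℂ)/2)
        * Complex.exp (-(Real.pi:ℂ) ^ 2 * (((4 * Real.pi ^ 2 * t)⁻¹ : ℝ) : ℂ)
            * ((‖x - y‖ : ℝ) : ℂ) ^ 2) := by
  have hexp : Complex.exp (-((x:ℂ) - (y:ℂ)) ^ 2 / (4 * (t:ℂ)))
      = Complex.exp (-(Real.pi:ℂ) ^ 2 * (((4 * Real.pi ^ 2 * t)⁻¹ : ℝ) : ℂ)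
          * ((‖x - y‖ : ℝ) : ℂ) ^ 2) := by
    congr 1
    have habs : ((‖x - y‖ : ℝ) : ℂ) ^ 2 = ((x:ℂ) - (y:ℂ)) ^ 2 := by
      rw [Real.norm_eq_abs, ← Complex.ofReal_pow, _root_.sq_abs, Complex.ofReal_pow,
        Complex.ofReal_sub]
    rw [habs]
    have h4 : ((4:ℂ) * (t:ℂ)) ≠ 0 := by
      simp only [ne_eq, mul_eq_zero]
      push_neg
      exact ⟨by norm_num, Complex.ofReal_ne_zero.2 ht.ne'⟩
    have hπ : ((Real.pi : ℂ)) ≠ 0 := Complex.ofReal_ne_zero.2 Real.pi_ne_zero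
    have htc : ((t : ℂ)) ≠ 0 := Complex.ofReal_ne_zero.2 ht.ne'
    push_cast
    field_simp
  rw [hexp]
  rw [← mul_assoc]
  congr 1
  have h2 : ((Real.pi:ℂ) / (t:ℂ)) = ((Real.pi / t : ℝ) : ℂ) := by push_cast; ring
  have h3 : ((Real.pi:ℂ) * (((4 * Real.pi ^ 2 * t)⁻¹ : ℝ) : ℂ))
      = ((Real.pi * (4 * Real.pi ^ 2 * t)⁻¹ : ℝ) : ℂ) := by push_cast; ring
  have he : ((1:ℂ)/2) = (((1:ℝ)/2 : ℝ) : ℂ) := by norm_num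
  rw [h2, h3, he, ← Complex.ofReal_cpow (by positivity), ← Complex.ofReal_cpow (by positivity)]
  rw [show (1 / (2 * (Real.pi:ℂ))) = ((1 / (2 * Real.pi) : ℝ) : ℂ) by push_cast; ring]
  rw [← Complex.ofReal_mul]
  exact congrArg _ (real_scalar_eq ht)

/-- For `t > 0`, the whole-line term equals the Gaussian-mollified integral appearing in
mathlib's Fourier inversion machinery. -/
lemma Aterm_eq (hu₀ : SchwartzHalfLine u₀) {x t : ℝ} (hx : 0 < x) (ht : 0 < t) :
    (1 / (2 * (Real.pi : ℂ))) *
        (∫ l : ℝ, Complex.exp (Complex.I * (l:ℂ) * (x:ℂ) - (l:ℂ) ^ 2 * (t:ℂ)) * uhat u₀ (l:ℂ))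
    = ∫ w : ℝ, (((Real.pi:ℂ) * (((4 * Real.pi ^ 2 * t)⁻¹ : ℝ) : ℂ)) ^ ((1:ℂ)/2)
        * Complex.exp (-(Real.pi:ℂ) ^ 2 * (((4 * Real.pi ^ 2 * t)⁻¹ : ℝ) : ℂ)
            * ((‖x - w‖ : ℝ) : ℂ) ^ 2)) • (Set.indicator (Ioi (0:ℝ)) u₀ w) := by
  set F : ℝ → ℝ → ℂ := fun l y =>
    Complex.exp (Complex.I * (l:ℂ) * (x:ℂ) - (l:ℂ) ^ 2 * (t:ℂ))
      * (u₀ y * Complex.exp (-Complex.I * (l:ℂ) * (y:ℂ))) with hF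
  have hFint : Integrable (Function.uncurry F)
      (volume.prod (volume.restrict (Ioi (0:ℝ)))) := by
    apply Integrable.mono'
        ((integrable_exp_neg_mul_sq ht).mul_prod (integrableOn_u0 hu₀).norm)
    · apply Continuous.aestronglyMeasurable
      apply Continuous.mul
      · apply Complex.continuous_exp.comp
        fun_prop
      · apply Continuous.mul (hu₀.1.continuous.comp continuous_snd)
        apply Complex.continuous_exp.comp
        fun_prop
    · filter_upwards with p
      rw [Function.uncurry, hF]; dsimp only
      rw [norm_mul, norm_mul, norm_cexp, norm_cexp, reA, reB, Real.exp_zero, mul_one]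
      rw [Real.exp_neg, ← Real.exp_neg]
      exact le_of_eq (by ring_nf)
  have step1 : (∫ l : ℝ, Complex.exp (Complex.I * (l:ℂ) * (x:ℂ) - (l:ℂ) ^ 2 * (t:ℂ))
        * uhat u₀ (l:ℂ)) = ∫ l : ℝ, ∫ y in Ioi (0:ℝ), F l y := by
    apply MeasureTheory.integral_congr_ae (ae_of_all _ fun l => ?_)
    rw [uhat, ← MeasureTheory.integral_const_mul]
  have step2 : (∫ l : ℝ, ∫ y in Ioi (0:ℝ), F l y) = ∫ y in Ioi (0:ℝ), ∫ l : ℝ, F l y :=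
    integral_integral_swap hFint
  have step3 : ∀ y : ℝ, (∫ l : ℝ, F l y)
      = u₀ y * (((Real.pi:ℂ) / (t:ℂ)) ^ ((1:ℂ)/2)
          * Complex.exp (-((x:ℂ) - (y:ℂ)) ^ 2 / (4 * (t:ℂ)))) := by
    intro y
    have hexp2 : ∀ l : ℝ, Complex.exp (Complex.I * (l:ℂ) * (x:ℂ) - (l:ℂ) ^ 2 * (t:ℂ))
        * Complex.exp (-Complex.I * (l:ℂ) * (y:ℂ))
        = Complex.exp (Complex.I * ((x:ℂ) - (y:ℂ)) * (l:ℂ)) * Complex.exp (-(t:ℂ) * (l:ℂ) ^ 2) := by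
      intro l
      rw [← Complex.exp_add, ← Complex.exp_add]
      congr 1
      ring
    have hptwise : ∀ l : ℝ, F l y
        = u₀ y * (Complex.exp (Complex.I * ((x:ℂ) - (y:ℂ)) * (l:ℂ))
            * Complex.exp (-(t:ℂ) * (l:ℂ) ^ 2)) := by
      intro l
      rw [hF]; dsimp only
      calc Complex.exp (Complex.I * (l:ℂ) * (x:ℂ) - (l:ℂ) ^ 2 * (t:ℂ))
            * (u₀ y * Complex.exp (-Complex.I * (l:ℂ) * (y:ℂ)))
          = u₀ y * (Complex.exp (Complex.I * (l:ℂ) * (x:ℂ) - (l:ℂ) ^ 2 * (t:ℂ))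
            * Complex.exp (-Complex.I * (l:ℂ) * (y:ℂ))) := by ring
        _ = u₀ y * (Complex.exp (Complex.I * ((x:ℂ) - (y:ℂ)) * (l:ℂ))
            * Complex.exp (-(t:ℂ) * (l:ℂ) ^ 2)) := by rw [hexp2 l]
    rw [MeasureTheory.integral_congr_ae (ae_of_all _ hptwise), MeasureTheory.integral_const_mul]
    congr 1
    have hb : (0:ℝ) < ((t:ℂ)).re := by rwa [Complex.ofReal_re]
    exact fourierIntegral_gaussian hb ((x:ℂ) - (y:ℂ))
  calc (1 / (2 * (Real.pi : ℂ))) *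
        (∫ l : ℝ, Complex.exp (Complex.I * (l:ℂ) * (x:ℂ) - (l:ℂ) ^ 2 * (t:ℂ)) * uhat u₀ (l:ℂ))
      = (1 / (2 * (Real.pi : ℂ))) * ∫ y in Ioi (0:ℝ), ∫ l : ℝ, F l y := by rw [step1, step2]
    _ = ∫ y in Ioi (0:ℝ), (1 / (2 * (Real.pi : ℂ))) * ∫ l : ℝ, F l y :=
        (MeasureTheory.integral_const_mul _ _).symm
    _ = ∫ y in Ioi (0:ℝ), (((Real.pi:ℂ) * (((4 * Real.pi ^ 2 * t)⁻¹ : ℝ) : ℂ)) ^ ((1:ℂ)/2)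
          * Complex.exp (-(Real.pi:ℂ) ^ 2 * (((4 * Real.pi ^ 2 * t)⁻¹ : ℝ) : ℂ)
              * ((‖x - y‖ : ℝ) : ℂ) ^ 2)) • u₀ y := by
        apply MeasureTheory.integral_congr_ae (ae_of_all _ fun y => ?_)
        rw [step3 y, smul_eq_mul]
        rw [← mul_assoc, mul_comm _ (u₀ y), mul_assoc]
        rw [gaussian_scalar_eq ht x y]
        ring
    _ = ∫ w : ℝ, (((Real.pi:ℂ) * (((4 * Real.pi ^ 2 * t)⁻¹ : ℝ) : ℂ)) ^ ((1:ℂ)/2)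
          * Complex.exp (-(Real.pi:ℂ) ^ 2 * (((4 * Real.pi ^ 2 * t)⁻¹ : ℝ) : ℂ)
              * ((‖x - w‖ : ℝ) : ℂ) ^ 2)) • (Set.indicator (Ioi (0:ℝ)) u₀ w) := by
        rw [← MeasureTheory.integral_indicator measurableSet_Ioi]
        apply MeasureTheory.integral_congr_ae (ae_of_all _ fun w => ?_)
        by_cases hw : w ∈ Ioi (0:ℝ)
        · rw [Set.indicator_of_mem hw, Set.indicator_of_mem hw]
        · rw [Set.indicator_of_notMem hw, Set.indicator_of_notMem hw, smul_zero]

/-- The whole-line term tends to `u₀ x` as `t → 0⁺` (Fourier inversion via Gaussian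
regularization). -/
lemma tendstoA (hu₀ : SchwartzHalfLine u₀) {x : ℝ} (hx : 0 < x) :
    Tendsto (fun t : ℝ => (1 / (2 * (Real.pi : ℂ))) *
        ∫ l : ℝ, Complex.exp (Complex.I * (l:ℂ) * (x:ℂ) - (l:ℂ) ^ 2 * (t:ℂ)) * uhat u₀ (l:ℂ))
      (𝓝[>] (0:ℝ)) (𝓝 (u₀ x)) := by
  set f : ℝ → ℂ := Set.indicator (Ioi (0:ℝ)) u₀ with hf
  have hfint : Integrable f :=
    (integrable_indicator_iff measurableSet_Ioi).2 (integrableOn_u0 hu₀)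
  have hev : f =ᶠ[𝓝 x] u₀ := by
    filter_upwards [Ioi_mem_nhds hx] with z hz
    exact Set.indicator_of_mem hz _
  have hfcont : ContinuousAt f x :=
    (hu₀.1.continuous.continuousAt).congr hev.symm
  have H := Real.tendsto_integral_gaussian_smul' (f := f) hfint (v := x) hfcont
  simp only [Module.finrank_self, Nat.cast_one] at H
  have hcomp : Tendsto (fun t : ℝ => (4 * Real.pi ^ 2 * t)⁻¹) (𝓝[>] (0:ℝ)) atTop := by
    apply tendsto_inv_nhdsGT_zero.comp
    apply tendsto_nhdsWithin_of_tendsto_nhds_of_eventually_within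
    · have h0 : Tendsto (fun t : ℝ => 4 * Real.pi ^ 2 * t) (𝓝 0) (𝓝 (4 * Real.pi ^ 2 * 0)) :=
        (continuous_const.mul continuous_id).tendsto 0
      rw [mul_zero] at h0
      exact h0.mono_left nhdsWithin_le_nhds
    · filter_upwards [self_mem_nhdsWithin] with t (ht : 0 < t)
      have : 0 < 4 * Real.pi ^ 2 * t := by positivity
      exact this
  have H2 := H.comp hcomp
  have hfx : f x = u₀ x := Set.indicator_of_mem hx _
  rw [hfx] at H2
  apply H2.congr'
  filter_upwards [self_mem_nhdsWithin] with t (ht : 0 < t)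
  rw [Function.comp_apply]
  exact (Aterm_eq hu₀ hx ht).symm

/-! ### Properties of the two ray directions -/

lemma arg1_eq : Complex.I * ((Real.pi:ℂ) / 4) = Complex.I * ((Real.pi / 4 : ℝ) : ℂ) := by
  push_cast; ring

lemma arg2_eq : Complex.I * (3 * (Real.pi:ℂ) / 4) = Complex.I * ((3 * Real.pi / 4 : ℝ) : ℂ) := by
  push_cast; ring

lemma hb_pos : (0:ℝ) < Real.sqrt 2 / 2 := by positivity

lemma hIe1 : (Complex.I * Complex.exp (Complex.I * ((Real.pi:ℂ) / 4))).re
    = -(Real.sqrt 2 / 2) := by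
  rw [arg1_eq, ray_re_I_mul, Real.sin_pi_div_four]

lemma hIe2 : (Complex.I * Complex.exp (Complex.I * (3 * (Real.pi:ℂ) / 4))).re
    = -(Real.sqrt 2 / 2) := by
  rw [arg2_eq, ray_re_I_mul, show 3 * Real.pi / 4 = Real.pi - Real.pi / 4 by ring,
    Real.sin_pi_sub, Real.sin_pi_div_four]

lemma he21 : ((Complex.exp (Complex.I * ((Real.pi:ℂ) / 4))) ^ 2).re = 0 := by
  rw [arg1_eq, ray_sq_re, show 2 * (Real.pi / 4) = Real.pi / 2 by ring, Real.cos_pi_div_two]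

lemma he22 : ((Complex.exp (Complex.I * (3 * (Real.pi:ℂ) / 4))) ^ 2).re = 0 := by
  rw [arg2_eq, ray_sq_re, show 2 * (3 * Real.pi / 4) = Real.pi / 2 + Real.pi by ring,
    Real.cos_add_pi, Real.cos_pi_div_two, neg_zero]

lemma habs1 : ‖Complex.exp (Complex.I * ((Real.pi:ℂ) / 4))‖ = 1 := by
  rw [arg1_eq]; exact ray_abs _

lemma habs2 : ‖Complex.exp (Complex.I * (3 * (Real.pi:ℂ) / 4))‖ = 1 := by
  rw [arg2_eq]; exact ray_abs _

/-- The `Γ`-contour term with the initial data tends to `0` as `t → 0⁺`. -/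
lemma tendstoB (hu₀ : SchwartzHalfLine u₀) {x : ℝ} (hx : 0 < x) :
    Tendsto (fun t : ℝ => (1 / (2 * (Real.pi : ℂ))) *
        gammaInt (fun l => Complex.exp (Complex.I * l * (x:ℂ) - l ^ 2 * (t:ℂ)) * uhat u₀ (-l)))
      (𝓝[>] (0:ℝ)) (𝓝 0) := by
  have h1 := tendstoB_ray hu₀ hx _ hIe1 hb_pos he21
  have h2 := tendstoB_ray hu₀ hx _ hIe2 hb_pos he22
  have hval : (∫ s in Ioi (0:ℝ), Complex.exp (Complex.I * ((s:ℂ)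
        * Complex.exp (Complex.I * ((Real.pi:ℂ) / 4))) * (x:ℂ))
        * uhat u₀ (-((s:ℂ) * Complex.exp (Complex.I * ((Real.pi:ℂ) / 4))))
        * Complex.exp (Complex.I * ((Real.pi:ℂ) / 4)))
      = ∫ s in Ioi (0:ℝ), Complex.exp (Complex.I * ((s:ℂ)
        * Complex.exp (Complex.I * (3 * (Real.pi:ℂ) / 4))) * (x:ℂ))
        * uhat u₀ (-((s:ℂ) * Complex.exp (Complex.I * (3 * (Real.pi:ℂ) / 4))))
        * Complex.exp (Complex.I * (3 * (Real.pi:ℂ) / 4)) := by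
    rw [rayB_value hu₀ hx _ hIe1 hb_pos, rayB_value hu₀ hx _ hIe2 hb_pos]
  have hGamma : Tendsto (fun t : ℝ =>
      gammaInt (fun l => Complex.exp (Complex.I * l * (x:ℂ) - l ^ 2 * (t:ℂ)) * uhat u₀ (-l)))
      (𝓝[>] (0:ℝ)) (𝓝 0) := by
    simp only [gammaInt]
    have := h1.sub h2
    rw [hval, sub_self] at this
    exact this
  have := hGamma.const_mul (1 / (2 * (Real.pi : ℂ)))
  rwa [mul_zero] at this

/-- The `Γ`-contour term with the boundary data tends to `0` as `t → 0⁺`. -/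
lemma tendstoC (hg₀ : ContDiff ℝ (⊤ : ℕ∞) g₀) {x : ℝ} (hx : 0 < x) :
    Tendsto (fun t : ℝ => (Complex.I / (Real.pi : ℂ)) *
        gammaInt (fun l => Complex.exp (Complex.I * l * (x:ℂ) - l ^ 2 * (t:ℂ)) * l
          * gtilde g₀ l t))
      (𝓝[>] (0:ℝ)) (𝓝 0) := by
  have h1 := tendstoC_ray hg₀ hx _ hIe1 hb_pos he21 habs1
  have h2 := tendstoC_ray hg₀ hx _ hIe2 hb_pos he22 habs2
  have hGamma : Tendsto (fun t : ℝ =>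
      gammaInt (fun l => Complex.exp (Complex.I * l * (x:ℂ) - l ^ 2 * (t:ℂ)) * l
        * gtilde g₀ l t)) (𝓝[>] (0:ℝ)) (𝓝 0) := by
    simp only [gammaInt]
    have := h1.sub h2
    rw [sub_self] at this
    exact this
  have := hGamma.const_mul (Complex.I / (Real.pi : ℂ))
  rwa [mul_zero] at this

end FokasAux


/-- for each fixed `x > 0`, `u(x,t) → u₀(x)` as `t → 0⁺`. -/
theorem fokas_initial_condition (u₀ g₀ : ℝ → ℂ) (u : ℝ → ℝ → ℂ)
    (hu₀ : SchwartzHalfLine u₀) (hg₀ : ContDiff ℝ (⊤ : ℕ∞) g₀)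
    (hu : IsFokasSolution u₀ g₀ u) :
    ∀ x : ℝ, 0 < x →
      Tendsto (fun t => u x t) (𝓝[>] (0:ℝ)) (𝓝 (u₀ x)) := by
  intro x hx
  have hA := FokasAux.tendstoA hu₀ hx
  have hB := FokasAux.tendstoB hu₀ hx
  have hC := FokasAux.tendstoC hg₀ hx
  have h := (hA.sub hB).sub hC
  rw [sub_zero, sub_zero] at h
  apply h.congr'
  filter_upwards [self_mem_nhdsWithin] with t (ht : 0 < t)
  exact (hu x t hx ht).symm
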